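/- Let G be a finite group, 𝒳 a partial partition of Irr(G), and suppose there is a supercharacter theory (𝒴, 𝒦) with 𝒳 ⊆ 𝒴. Then 𝒴 refines the filtration ℱ(𝒳) and every member of 𝒳 belongs to ℱ(𝒳). -/

import Mathlib

open scoped Classical

/-- The set of irreducible characters of `G` over `ℂ`. -/
noncomputable def Irr (G : Type) [Group G] [Fintype G] : Set (G → ℂ) :=
  {χ | ∃ V : FDRep ℂ G, CategoryTheory.Simple V ∧ χ = V.character}

/-- The trivial character. -/
noncomputable def triv (G : Type) [Group G] [Fintype G] : G → ℂ := fun _ => 1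

/-- The Wedderburn sum `σ_X = ∑_{χ ∈ X} χ(1)·χ`. -/
noncomputable def wsum {G : Type} [Group G] [Fintype G] (X : Set (G → ℂ)) : G → ℂ :=
  fun g => ∑ᶠ χ ∈ X, χ 1 * χ g

/-- `P` is a partition of the set `S`. -/
def IsPartitionOf {α : Type*} (S : Set α) (P : Set (Set α)) : Prop :=
  (∀ p ∈ P, p.Nonempty ∧ p ⊆ S) ∧ ∀ a ∈ S, ∃! p, p ∈ P ∧ a ∈ p

/-- A partial partition of `Irr G`: nonempty pairwise disjoint subsets of `Irr G`. -/
def IsPartialPartition (G : Type) [Group G] [Fintype G] (P : Set (Set (G → ℂ))) : Prop :=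
  (∀ p ∈ P, p.Nonempty ∧ p ⊆ Irr G) ∧ ∀ p ∈ P, ∀ q ∈ P, p ≠ q → p ∩ q = ∅

/-- A supercharacter theory of `G` in the sense of Diaconis–Isaacs: `Y` partitions
`Irr G`, `K` partitions `G` with `{1} ∈ K`, `|Y| = |K|`, and every Wedderburn sum
`σ_X`, `X ∈ Y`, is constant on every member of `K`. -/
def IsSCT (G : Type) [Group G] [Fintype G] (Y : Set (Set (G → ℂ))) (K : Set (Set G)) : Prop :=
  IsPartitionOf (Irr G) Y ∧ IsPartitionOf (Set.univ : Set G) K ∧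
    ({(1 : G)} : Set G) ∈ K ∧ Y.ncard = K.ncard ∧
    ∀ X ∈ Y, ∀ k ∈ K, ∀ g ∈ k, ∀ h ∈ k, wsum X g = wsum X h

/-- The coefficient of `χ(1)·χ` in the expansion of the class function `a` in the
orthogonal basis `{φ(1)·φ : φ ∈ Irr G}` of `cf(G)`. -/
noncomputable def coeff {G : Type} [Group G] [Fintype G] (χ a : G → ℂ) : ℂ :=
  (∑ g : G, starRingEnd ℂ (χ g) * a g) / ((Fintype.card G : ℂ) * χ 1)

/-- The (non-unital) subalgebra of `cf(G)` generated by the Wedderburn sums of `𝒳`. -/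
noncomputable def wAlg (G : Type) [Group G] [Fintype G] (𝒳 : Set (Set (G → ℂ))) :
    NonUnitalSubalgebra ℂ (G → ℂ) :=
  NonUnitalAlgebra.adjoin ℂ {s | ∃ X ∈ 𝒳, s = wsum X}

/-- The equivalence relation defining the filtration `ℱ(𝒳)`: `χ ∼ ψ` iff the
coefficients of `χ(1)χ` and `ψ(1)ψ` agree in every element of the algebra `𝒜`. -/
def frel (G : Type) [Group G] [Fintype G] (𝒳 : Set (Set (G → ℂ))) (χ ψ : G → ℂ) : Prop :=
  ∀ a ∈ wAlg G 𝒳, coeff χ a = coeff ψ a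

/-- The filtration `ℱ(𝒳)`: the partition of `Irr G` into equivalence classes of `frel`. -/
def Filt (G : Type) [Group G] [Fintype G] (𝒳 : Set (Set (G → ℂ))) : Set (Set (G → ℂ)) :=
  {C | ∃ χ ∈ Irr G, C = {ψ ∈ Irr G | frel G 𝒳 χ ψ}}

/-!
The Wedderburn sums `σ_p`, `p ∈ Y`, of a supercharacter theory `(Y, K)` are linearly independent:
by orthogonality of characters, the coefficient of `χ(1)χ` in `σ_p` is `1` or `0` according as
`χ ∈ p` or not. They lie in the algebra of functions constant on the members of `K`, whose
dimension is at most `|K| = |Y|`, so they span it. Hence this algebra contains `𝒜`, every element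
of `𝒜` is a combination of the `σ_p`, and characters in a common part of `Y` have equal
coefficients in it: `Y` refines `ℱ(𝒳)`. Conversely, for `X ∈ 𝒳` the element `σ_X ∈ 𝒜` separates
`X` from the other characters, so `X` is a whole class of `ℱ(𝒳)`.
-/

open ComplexConjugate

namespace Module.End

variable {K V : Type*} [Field K] [IsAlgClosed K] [AddCommGroup V] [Module K V]
  [FiniteDimensional K V]

lemma trace_eq_finsum_of_eigenspace_smul {f h : End K V} (hf : f.IsSemisimple) {c : K → K}
    (hc : ∀ μ, ∀ x ∈ f.eigenspace μ, h x = c μ • x) :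
    LinearMap.trace K V h = ∑ᶠ μ, c μ * Module.finrank K (f.eigenspace μ) := by
  have hInt : DirectSum.IsInternal f.eigenspace := by
    refine DirectSum.isInternal_submodule_of_iSupIndep_of_iSup_eq_top f.eigenspaces_iSupIndep ?_
    simpa only [hf.isFinitelySemisimple.maxGenEigenspace_eq_eigenspace]
      using f.iSup_maxGenEigenspace_eq_top
  have hfin := WellFoundedGT.finite_ne_bot_of_iSupIndep f.eigenspaces_iSupIndep
  have hmaps : ∀ μ, Set.MapsTo h (f.eigenspace μ) (f.eigenspace μ) := fun μ x hx => by
    rw [SetLike.mem_coe, hc μ x hx]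
    exact Submodule.smul_mem _ _ hx
  rw [LinearMap.trace_eq_sum_trace_restrict' hInt hfin hmaps, finsum_eq_sum_of_support_subset _ (s := hfin.toFinset) fun μ hμ => ?_]
  · refine Finset.sum_congr rfl fun μ _ => ?_
    have : h.restrict (hmaps μ) = c μ • LinearMap.id := by
      ext x
      exact hc μ x x.2
    rw [this, map_smul, LinearMap.trace_id, smul_eq_mul]
  · simp only [Set.Finite.coe_toFinset, Set.mem_ofPred_eq]
    rintro hbot
    exact hμ (by simp only [Submodule.finrank_eq_zero.mpr hbot, Nat.cast_zero, mul_zero])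

-- `f` is diagonalizable with roots of unity as eigenvalues, and `conj` inverts those.
lemma trace_eq_conj_trace_of_pow_eq_one {V : Type*} [AddCommGroup V] [Module ℂ V]
    [FiniteDimensional ℂ V] {f f' : End ℂ V} {n : ℕ} (hn : n ≠ 0) (hfn : f ^ n = 1)
    (hf' : f' * f = 1) :
    LinearMap.trace ℂ V f' = conj (LinearMap.trace ℂ V f) := by
  have hss : f.IsSemisimple := by
    refine isSemisimple_of_squarefree_aeval_eq_zero
      (Polynomial.separable_X_pow_sub_C (1 : ℂ) (Nat.cast_ne_zero.mpr hn) one_ne_zero).squarefree ?_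
    simp [hfn]
  have hf'_eig : ∀ μ, ∀ x ∈ f.eigenspace μ, f' x = μ⁻¹ • x := fun μ x hx => by
    have hx' : x = μ • f' x := by
      rw [← map_smul, ← mem_eigenspace_iff.mp hx, ← Module.End.mul_apply, hf', Module.End.one_apply]
    rcases eq_or_ne μ 0 with rfl | hμ
    · rw [zero_smul] at hx'
      rw [hx', map_zero, smul_zero]
    · calc f' x = μ⁻¹ • μ • f' x := by rw [smul_smul, inv_mul_cancel₀ hμ, one_smul]
        _ = μ⁻¹ • x := by rw [← hx']
  have hconj : ∀ μ, conj (μ * finrank ℂ (f.eigenspace μ)) = μ⁻¹ * finrank ℂ (f.eigenspace μ) := by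
    intro μ
    rcases eq_or_ne (f.eigenspace μ) ⊥ with hbot | hbot
    · simp only [Submodule.finrank_eq_zero.mpr hbot, Nat.cast_zero, mul_zero, map_zero]
    obtain ⟨x, hx, hx0⟩ := (Submodule.ne_bot_iff _).mp hbot
    have hμn : μ ^ n = 1 := by
      have h := HasEigenvector.pow_apply ⟨hx, hx0⟩ n
      rw [hfn, Module.End.one_apply] at h
      have h' : (μ ^ n - 1) • x = 0 := by rw [sub_smul, one_smul, ← h, sub_self]
      exact sub_eq_zero.mp ((smul_eq_zero.mp h').resolve_right hx0)
    rw [map_mul, map_natCast, ← Complex.inv_eq_conj (Complex.norm_eq_one_of_pow_eq_one hμn hn)]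
  rw [trace_eq_finsum_of_eigenspace_smul hss hf'_eig,
    trace_eq_finsum_of_eigenspace_smul hss fun μ x hx => mem_eigenspace_iff.mp hx]
  exact (finsum_congr fun μ => (hconj μ).symm).trans (starAddEquiv.map_finsum _).symm

end Module.End

section Characters

variable {G : Type} [Group G] [Fintype G]

lemma FDRep.char_inv_eq_conj (V : FDRep ℂ G) (g : G) :
    V.character g⁻¹ = conj (V.character g) :=
  Module.End.trace_eq_conj_trace_of_pow_eq_one Fintype.card_ne_zero
    (by rw [← map_pow, pow_card_eq_one, map_one])
    (by rw [← map_mul, inv_mul_cancel, map_one])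

lemma sum_conj_mul_of_mem_Irr {χ ψ : G → ℂ} (hχ : χ ∈ Irr G) (hψ : ψ ∈ Irr G) :
    ∑ g, conj (χ g) * ψ g = if χ = ψ then (Fintype.card G : ℂ) else 0 := by
  obtain ⟨V, hV, rfl⟩ := hχ
  obtain ⟨W, hW, rfl⟩ := hψ
  have hG : (Nat.card G : ℂ) ≠ 0 := Nat.cast_ne_zero.mpr Nat.card_pos.ne'
  have : Invertible (Nat.card G : ℂ) := invertibleOfNonzero hG
  have orth (V W : FDRep ℂ G) [CategoryTheory.Simple V] [CategoryTheory.Simple W] :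
      ∑ g, conj (V.character g) * W.character g =
        if Nonempty (W ≅ V) then (Fintype.card G : ℂ) else 0 := by
    simp_rw [← FDRep.char_inv_eq_conj, mul_comm (V.character _)]
    rw [← Nat.card_eq_fintype_card, ← mul_inv_cancel_left₀ hG (∑ g, _), FDRep.char_orthonormal]
    split_ifs <;> simp
  split_ifs with h
  · rw [h, orth W W, if_pos ⟨CategoryTheory.Iso.refl W⟩]
  · rw [orth V W, if_neg fun ⟨i⟩ => h (FDRep.char_iso i).symm]

lemma apply_one_ne_zero_of_mem_Irr {χ : G → ℂ} (hχ : χ ∈ Irr G) : χ 1 ≠ 0 := by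
  have hχχ := sum_conj_mul_of_mem_Irr hχ hχ
  obtain ⟨V, -, rfl⟩ := hχ
  rw [FDRep.char_one, Nat.cast_ne_zero, Ne, Module.finrank_zero_iff]
  intro hV
  have hzero : V.character = 0 := funext fun g => by
    rw [FDRep.character, Subsingleton.elim (V.ρ g) 0, map_zero, Pi.zero_apply]
  simp only [hzero, Pi.zero_apply, map_zero, mul_zero, Finset.sum_const_zero, if_pos] at hχχ
  exact Nat.cast_ne_zero.mpr Fintype.card_ne_zero hχχ.symm

lemma coeff_of_mem_Irr {χ ψ : G → ℂ} (hχ : χ ∈ Irr G) (hψ : ψ ∈ Irr G) :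
    coeff χ ψ = if χ = ψ then (χ 1)⁻¹ else 0 := by
  rw [coeff, sum_conj_mul_of_mem_Irr hχ hψ]
  split_ifs
  · field_simp [apply_one_ne_zero_of_mem_Irr hχ]
  · exact zero_div _

noncomputable def coeffₗ (χ : G → ℂ) : Module.Dual ℂ (G → ℂ) where
  toFun := coeff χ
  map_add' a b := by simp only [coeff, Pi.add_apply, mul_add, Finset.sum_add_distrib, add_div]
  map_smul' c a := by
    simp only [coeff, Pi.smul_apply, smul_eq_mul, mul_left_comm _ c, ← Finset.mul_sum,
      mul_div_assoc, RingHom.id_apply]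

@[simp]
lemma coeffₗ_apply (χ a : G → ℂ) : coeffₗ χ a = coeff χ a := rfl

lemma linearIndependent_Irr : LinearIndependent ℂ ((↑) : Irr G → G → ℂ) := by
  refine .of_pairwise_dual_eq_zero_one _ (fun χ => (χ.1 1) • coeffₗ χ.1) (fun χ ψ hne => ?_)
    fun χ => ?_
  · simp [coeff_of_mem_Irr χ.2 ψ.2, Subtype.coe_ne_coe.mpr hne]
  · simp [coeff_of_mem_Irr χ.2 χ.2, apply_one_ne_zero_of_mem_Irr χ.2]

lemma finite_Irr : (Irr G).Finite :=
  linearIndependent_Irr.setFinite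

lemma wsum_eq_sum {X : Set (G → ℂ)} (hX : X.Finite) :
    wsum X = ∑ φ ∈ hX.toFinset, φ 1 • φ := by
  ext g
  simp only [wsum, Finset.sum_apply, Pi.smul_apply, smul_eq_mul]
  exact finsum_mem_eq_finite_toFinset_sum _ hX

lemma coeff_wsum {X : Set (G → ℂ)} {χ : G → ℂ} (hX : X ⊆ Irr G) (hχ : χ ∈ Irr G) :
    coeff χ (wsum X) = if χ ∈ X then 1 else 0 := by
  have hXfin := finite_Irr.subset hX
  rw [← coeffₗ_apply, wsum_eq_sum hXfin, map_sum]
  simp_rw [map_smul, coeffₗ_apply, smul_eq_mul]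
  rw [Finset.sum_congr rfl fun φ hφ => by
    rw [coeff_of_mem_Irr hχ (hX (hXfin.mem_toFinset.mp hφ)), mul_ite, mul_zero]]
  simp [Finset.sum_ite_eq, apply_one_ne_zero_of_mem_Irr hχ]

end Characters

section BlockFunctions

variable {α : Type*}

def constOnBlocks (R : Type*) [CommSemiring R] (K : Set (Set α)) : Subalgebra R (α → R) where
  carrier := {a | ∀ k ∈ K, ∀ g ∈ k, ∀ h ∈ k, a g = a h}
  mul_mem' ha hb k hk g hg h hh := by
    simp only [Pi.mul_apply, ha k hk g hg h hh, hb k hk g hg h hh]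
  add_mem' ha hb k hk g hg h hh := by
    simp only [Pi.add_apply, ha k hk g hg h hh, hb k hk g hg h hh]
  algebraMap_mem' _ _ _ _ _ _ _ := rfl

lemma finrank_constOnBlocks_le {R : Type*} [Field R] [Finite α] {K : Set (Set α)}
    (hK : IsPartitionOf Set.univ K) :
    Module.finrank R (Subalgebra.toSubmodule (constOnBlocks R K)) ≤ K.ncard := by
  choose rep hrep using fun k : K => (hK.1 k k.2).1
  have hinj : Function.Injective
      ((LinearMap.funLeft R R rep).comp (Subalgebra.toSubmodule (constOnBlocks R K)).subtype) := by
    intro a b hab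
    ext g
    obtain ⟨k, ⟨hk, hg⟩, -⟩ := hK.2 g (Set.mem_univ g)
    rw [a.2 k hk g hg _ (hrep ⟨k, hk⟩), b.2 k hk g hg _ (hrep ⟨k, hk⟩)]
    exact congrFun hab ⟨k, hk⟩
  have : Fintype K := Fintype.ofFinite K
  calc _ ≤ Module.finrank R (K → R) := LinearMap.finrank_le_finrank_of_injective hinj
    _ = K.ncard := by
      rw [Module.finrank_fintype_fun_eq_card, ← Nat.card_coe_set_eq, Nat.card_eq_fintype_card]

end BlockFunctions

lemma IsPartitionOf.eq_of_mem {α : Type*} {S : Set α} {P : Set (Set α)} (hP : IsPartitionOf S P)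
    {a : α} (ha : a ∈ S) {p q : Set α} (hp : p ∈ P) (hq : q ∈ P) (hap : a ∈ p) (haq : a ∈ q) :
    p = q :=
  (hP.2 a ha).unique ⟨hp, hap⟩ ⟨hq, haq⟩

section SupercharacterTheory

variable {G : Type} [Group G] [Fintype G] {Y : Set (Set (G → ℂ))} {K : Set (Set G)}

lemma coeff_wsum_of_mem_of_isPartitionOf (hY : IsPartitionOf (Irr G) Y) {p q : Set (G → ℂ)}
    (hp : p ∈ Y) (hq : q ∈ Y) {χ : G → ℂ} (hχ : χ ∈ p) :
    coeff χ (wsum q) = if p = q then 1 else 0 := by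
  have hχIrr := (hY.1 p hp).2 hχ
  rw [coeff_wsum (hY.1 q hq).2 hχIrr]
  exact if_congr ⟨fun hχq => hY.eq_of_mem hχIrr hp hq hχ hχq, fun h => h ▸ hχ⟩ rfl rfl

lemma linearIndependent_wsum (hY : IsPartitionOf (Irr G) Y) :
    LinearIndependent ℂ (fun p : Y => wsum (p : Set (G → ℂ))) := by
  choose rep hrep using fun p : Y => (hY.1 p p.2).1
  refine .of_pairwise_dual_eq_zero_one _ (fun p => coeffₗ (rep p)) (fun p q hne => ?_) fun p => ?_
  · simp [coeff_wsum_of_mem_of_isPartitionOf hY p.2 q.2 (hrep p), Subtype.coe_ne_coe.mpr hne]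
  · simp [coeff_wsum_of_mem_of_isPartitionOf hY p.2 p.2 (hrep p)]

lemma IsSCT.span_wsum_eq (hsct : IsSCT G Y K) :
    Submodule.span ℂ (wsum '' Y) = Subalgebra.toSubmodule (constOnBlocks ℂ K) := by
  obtain ⟨hY, hK, -, hcard, hconst⟩ := hsct
  have hli := linearIndependent_wsum hY
  have : Fintype Y := @Fintype.ofFinite _ hli.finite
  refine Submodule.eq_of_le_of_finrank_le ?_ ?_
  · rw [Submodule.span_le]
    rintro - ⟨p, hp, rfl⟩
    exact hconst p hp
  · rw [Set.image_eq_range, finrank_span_eq_card hli, ← Nat.card_eq_fintype_card,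
      Nat.card_coe_set_eq, hcard]
    exact finrank_constOnBlocks_le hK

lemma IsSCT.wAlg_le_span (hsct : IsSCT G Y K) {𝒳 : Set (Set (G → ℂ))} (hsub : 𝒳 ⊆ Y) :
    (wAlg G 𝒳 : Set (G → ℂ)) ⊆ Submodule.span ℂ (wsum '' Y) := by
  rw [hsct.span_wsum_eq]
  refine NonUnitalAlgebra.adjoin_le (S := (constOnBlocks ℂ K).toNonUnitalSubalgebra) ?_
  rintro - ⟨X, hX, rfl⟩
  exact hsct.2.2.2.2 X (hsub hX)

lemma IsSCT.frel_of_mem (hsct : IsSCT G Y K) {𝒳 : Set (Set (G → ℂ))} (hsub : 𝒳 ⊆ Y)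
    {p : Set (G → ℂ)} (hp : p ∈ Y) {χ ψ : G → ℂ} (hχ : χ ∈ p) (hψ : ψ ∈ p) :
    frel G 𝒳 χ ψ := fun a ha => by
  have hagree : Set.EqOn (coeffₗ χ) (coeffₗ ψ) (wsum '' Y) := by
    rintro - ⟨q, hq, rfl⟩
    simp only [coeffₗ_apply, coeff_wsum_of_mem_of_isPartitionOf hsct.1 hp hq hχ,
      coeff_wsum_of_mem_of_isPartitionOf hsct.1 hp hq hψ]
  exact LinearMap.eqOn_span hagree (hsct.wAlg_le_span hsub ha)

end SupercharacterTheory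

theorem stmt7_general (G : Type) [Group G] [Fintype G] (𝒳 Y : Set (Set (G → ℂ))) (K : Set (Set G))
    (hsct : IsSCT G Y K) (hsub : 𝒳 ⊆ Y) :
    (∀ F ∈ Filt G 𝒳, F = ⋃₀ {p ∈ Y | p ⊆ F}) ∧ 𝒳 ⊆ Filt G 𝒳 := by
  have hY := hsct.1
  constructor
  · rintro F ⟨χ, -, rfl⟩
    refine subset_antisymm (fun ψ ⟨hψ, hχψ⟩ => ?_) (Set.sUnion_subset fun p hp => hp.2)
    obtain ⟨p, ⟨hp, hψp⟩, -⟩ := hY.2 ψ hψ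
    refine ⟨p, ⟨hp, fun φ hφ => ⟨(hY.1 p hp).2 hφ, fun a ha => ?_⟩⟩, hψp⟩
    exact (hχψ a ha).trans (hsct.frel_of_mem hsub hp hψp hφ a ha)
  · intro X hX
    have hXY := hsub hX
    have hXIrr := (hY.1 X hXY).2
    obtain ⟨χ, hχ⟩ := (hY.1 X hXY).1
    refine ⟨χ, hXIrr hχ, subset_antisymm
      (fun ψ hψ => ⟨hXIrr hψ, hsct.frel_of_mem hsub hXY hχ hψ⟩) fun ψ ⟨hψ, hχψ⟩ => ?_⟩
    have h := hχψ (wsum X) (NonUnitalAlgebra.subset_adjoin ℂ ⟨X, hX, rfl⟩)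
    simpa [coeff_wsum hXIrr (hXIrr hχ), coeff_wsum hXIrr hψ, hχ] using h.symm

/-- if `𝒳` is a partial partition of `Irr G` contained in the character
partition `Y` of some supercharacter theory `(Y, K)`, then `Y` refines the filtration
`ℱ(𝒳)` (each member of `ℱ(𝒳)` is a union of members of `Y`) and `𝒳 ⊆ ℱ(𝒳)`. -/
theorem stmt7 (G : Type) [Group G] [Fintype G] (𝒳 Y : Set (Set (G → ℂ))) (K : Set (Set G))
    (hpp : IsPartialPartition G 𝒳) (hsct : IsSCT G Y K) (hsub : 𝒳 ⊆ Y) :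
    (∀ F ∈ Filt G 𝒳, F = ⋃₀ {p ∈ Y | p ⊆ F}) ∧ 𝒳 ⊆ Filt G 𝒳 :=
  stmt7_general G 𝒳 Y K hsct hsub
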